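/- arXiv:cond-mat/0607616 — 4 statements merged into one kernel-verified Lean document; each statement's English description precedes it below -/
import Mathlib

section
/- Generalized Magnetization-Structure bound for the Curie–Weiss model: for every N ≥ 1, every finite nonempty set Σ, every weight function ξ : Σ → ℝ with ξ_τ > 0 for all τ, and every trial magnetization m̃ : Σ → ℝ, one has (1/N) ln Z_N(β) ≥ (1/N) ln [ (∑_{σ∈{-1,1}^N} ∑_{τ∈Σ} ξ_τ exp(βJN m(σ) m̃(τ))) / (∑_{τ∈Σ} ξ_τ exp((βJN/2) m̃(τ)²)) ], for all β > 0 and J > 0. -/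
/-!
With `c = βJN ≥ 0`, the inequality `c m m̃ ≤ (c/2) m² + (c/2) m̃²` bounds every term
`ξ_τ exp(c m(σ) m̃(τ))` of the numerator by `exp((c/2) m(σ)²) · ξ_τ exp((c/2) m̃(τ)²)`.
Summing over `σ` and `τ` gives numerator `≤ Z_N(β) · denominator`, and `log` is monotone.
-/

open Real

/-- The value of a spin: `true ↦ 1`, `false ↦ -1`. -/
noncomputable def spin (b : Bool) : ℝ := if b then 1 else -1

/-- The magnetization per spin of a configuration `σ ∈ {-1,1}^N`. -/
noncomputable def mag (N : ℕ) (σ : Fin N → Bool) : ℝ := (1 / (N : ℝ)) * ∑ i, spin (σ i)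

/-- The Curie–Weiss partition function `Z_N(β) = ∑_σ exp((βJN/2) m(σ)²)`. -/
noncomputable def Zcw (N : ℕ) (J β : ℝ) : ℝ :=
  ∑ σ : Fin N → Bool, Real.exp (β * J * (N : ℝ) / 2 * (mag N σ) ^ 2)

lemma exp_mul_mul_le_exp_half_sq_mul {c : ℝ} (hc : 0 ≤ c) (a b : ℝ) :
    exp (c * a * b) ≤ exp (c / 2 * a ^ 2) * exp (c / 2 * b ^ 2) := by
  rw [← exp_add, exp_le_exp]
  nlinarith [mul_nonneg hc (sq_nonneg (a - b))]

lemma sum_sum_mul_exp_le_mul {ι S : Type*} [Fintype ι] [Fintype S] {c : ℝ} (hc : 0 ≤ c)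
    (m : ι → ℝ) (ξ : S → ℝ) (hξ : ∀ τ, 0 ≤ ξ τ) (mt : S → ℝ) :
    ∑ σ, ∑ τ, ξ τ * exp (c * m σ * mt τ) ≤
      (∑ σ, exp (c / 2 * m σ ^ 2)) * ∑ τ, ξ τ * exp (c / 2 * mt τ ^ 2) := by
  rw [Finset.sum_mul]
  gcongr with σ _
  rw [Finset.mul_sum]
  refine Finset.sum_le_sum fun τ _ => ?_
  calc ξ τ * exp (c * m σ * mt τ)
      ≤ ξ τ * (exp (c / 2 * m σ ^ 2) * exp (c / 2 * mt τ ^ 2)) := by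
        gcongr
        · exact hξ τ
        · exact exp_mul_mul_le_exp_half_sq_mul hc _ _
    _ = exp (c / 2 * m σ ^ 2) * (ξ τ * exp (c / 2 * mt τ ^ 2)) := by ring

theorem cw_mast_bound_general (N : ℕ) (β J : ℝ) (hβ : 0 < β) (hJ : 0 < J)
    (S : Type) [Fintype S] [Nonempty S] (ξ : S → ℝ) (hξ : ∀ τ, 0 < ξ τ) (mt : S → ℝ) :
    (1 / (N : ℝ)) * Real.log (Zcw N J β) ≥
      (1 / (N : ℝ)) * Real.log
        ((∑ σ : Fin N → Bool, ∑ τ : S, ξ τ * Real.exp (β * J * (N : ℝ) * mag N σ * mt τ)) /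
          (∑ τ : S, ξ τ * Real.exp (β * J * (N : ℝ) / 2 * (mt τ) ^ 2))) := by
  have hc : 0 ≤ β * J * (N : ℝ) := by positivity
  have hweighted {f : S → ℝ} : 0 < ∑ τ, ξ τ * exp (f τ) :=
    Finset.sum_pos (fun τ _ => mul_pos (hξ τ) (exp_pos _)) Finset.univ_nonempty
  have hnum : 0 < ∑ σ : Fin N → Bool, ∑ τ, ξ τ * exp (β * J * N * mag N σ * mt τ) :=
    Finset.sum_pos (fun _ _ => hweighted) Finset.univ_nonempty
  have hsplit := sum_sum_mul_exp_le_mul hc (mag N) ξ (fun τ => (hξ τ).le) mt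
  gcongr
  · exact div_pos hnum hweighted
  · exact (div_le_iff₀ hweighted).2 hsplit

/-- Generalized Magnetization-Structure bound for the Curie–Weiss model: for every `N ≥ 1`,
every Magnetization Structure `(Σ, ξ, m̃)` (a finite nonempty set `Σ`, strictly positive
weights `ξ`, and a trial magnetization `m̃ : Σ → ℝ`), all `β > 0` and `J > 0`:
`(1/N) ln Z_N(β) ≥ (1/N) ln [ (∑_σ ∑_τ ξ_τ exp(βJN m(σ) m̃(τ))) /
(∑_τ ξ_τ exp((βJN/2) m̃(τ)²)) ]`. -/
theorem cw_mast_bound (N : ℕ) (hN : 1 ≤ N) (β J : ℝ) (hβ : 0 < β) (hJ : 0 < J)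
    (S : Type) [Fintype S] [Nonempty S] (ξ : S → ℝ) (hξ : ∀ τ, 0 < ξ τ) (mt : S → ℝ) :
    (1 / (N : ℝ)) * Real.log (Zcw N J β) ≥
      (1 / (N : ℝ)) * Real.log
        ((∑ σ : Fin N → Bool, ∑ τ : S, ξ τ * Real.exp (β * J * (N : ℝ) * mag N σ * mt τ)) /
          (∑ τ : S, ξ τ * Real.exp (β * J * (N : ℝ) / 2 * (mt τ) ^ 2))) :=
  cw_mast_bound_general N β J hβ hJ S ξ hξ mt
end

section
/- For every N ≥ 1, every β > 0, J > 0, and every real number m̃, the Curie–Weiss pressure satisfies the lower bound (1/N) ln Z_N(β) ≥ ln 2 + ln cosh(βJ m̃) − (βJ/2) m̃². -/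
open Real

/-!
Gibbs variational lower bound: by the tangent-line inequality `m² ≥ 2 m̃ m - m̃²`, each Boltzmann
weight `exp (βJN/2 · m²)` dominates `exp (βJ m̃ ∑ᵢ σᵢ - βJN/2 · m̃²)`, and these product weights
sum over `{-1,1}^N` to `exp (-βJN/2 · m̃²) (2 cosh (βJ m̃))^N`.
-/

lemma sum_exp_mul_sum_spin (c : ℝ) (N : ℕ) :
    ∑ σ : Fin N → Bool, exp (c * ∑ i, spin (σ i)) = (2 * cosh c) ^ N := by
  have two_cosh : 2 * cosh c = ∑ b : Bool, exp (c * spin b) := by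
    simp [cosh_eq, spin, mul_div_cancel₀]
  simp_rw [two_cosh, Fintype.sum_pow, Finset.mul_sum, exp_sum]

lemma sum_spin_eq_mul_mag (N : ℕ) (σ : Fin N → Bool) : ∑ i, spin (σ i) = N * mag N σ := by
  rcases N.eq_zero_or_pos with rfl | hN
  · simp
  · rw [mag, ← mul_assoc, mul_one_div_cancel (by positivity), one_mul]

lemma exp_mul_two_cosh_pow_le_Zcw (N : ℕ) (J β mt : ℝ) (hβJ : 0 ≤ β * J) :
    exp (-(β * J * N / 2 * mt ^ 2)) * (2 * cosh (β * J * mt)) ^ N ≤ Zcw N J β := by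
  rw [← sum_exp_mul_sum_spin, Finset.mul_sum]
  refine Finset.sum_le_sum fun σ _ => ?_
  rw [← exp_add, exp_le_exp, sum_spin_eq_mul_mag]
  nlinarith [mul_nonneg (mul_nonneg hβJ N.cast_nonneg) (sq_nonneg (mag N σ - mt))]

/-- For every `N ≥ 1`, `β > 0`, `J > 0`, and every real `m̃`, the Curie–Weiss pressure
satisfies `(1/N) ln Z_N(β) ≥ ln 2 + ln cosh(βJ m̃) − (βJ/2) m̃²`. -/
theorem cw_lower_bound (N : ℕ) (hN : 1 ≤ N) (β J : ℝ) (hβ : 0 < β) (hJ : 0 < J) (mt : ℝ) :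
    (1 / (N : ℝ)) * Real.log (Zcw N J β) ≥
      Real.log 2 + Real.log (Real.cosh (β * J * mt)) - β * J / 2 * mt ^ 2 := by
  have hZ := log_le_log (by positivity) (exp_mul_two_cosh_pow_le_Zcw N J β mt (mul_pos hβ hJ).le)
  rw [log_mul (exp_pos _).ne' (by positivity), log_exp, log_pow,
    log_mul two_ne_zero (cosh_pos _).ne'] at hZ
  have hNpos : (0 : ℝ) < N := by exact_mod_cast hN
  rw [one_div_mul_eq_div, ge_iff_le, le_div_iff₀ hNpos]
  linarith
end

section
/- Extended Variational Principle for the Curie–Weiss model: for every β > 0 and J > 0, the limit as N → ∞ of the supremum, taken for each N separately over all Magnetization Structures (Σ, ξ, m̃) with Σ finite, ξ strictly positive, and m̃ : Σ → [-1,1], of the trial function G_N(Σ, ξ, m̃) = (1/N) ln [ (∑_{σ∈{-1,1}^N} ∑_{τ∈Σ} ξ_τ exp(βJN m(σ) m̃(τ))) / (∑_{τ∈Σ} ξ_τ exp((βJN/2) m̃(τ)²)) ] exists and equals the limiting pressure: lim_{N→∞} sup_{(Σ,ξ,m̃)} G_N(Σ, ξ, m̃) = lim_{N→∞} (1/N)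 ln Z_N(β). -/
/-!
The pressure `p_N = (1/N) log Z_N` converges because `log Z_N` is subadditive: splitting the
spins into two blocks, the convexity of `x ↦ x²` (Sedrakyan's inequality) bounds the energy of
the whole system by the sum of the block energies. For every Magnetization Structure,
`2 m m̃ ≤ m² + m̃²` bounds the numerator of `G_N` by `Z_N` times its denominator, so
`G_N ≤ p_N`. Conversely, taking for `Σ` the `N + 1` possible magnetizations `(2k - N)/N`
with weights `exp(-(βJN/2) m̃²)` makes the denominator equal to `N + 1` and the numerator at
least `Z_N`, so `sup G_N ≥ p_N - log(N + 1)/N`.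
-/

open Real Filter

/-- A Magnetization Structure: a finite nonempty set `Σ`, strictly positive weights
`ξ : Σ → ℝ`, and a trial magnetization `m̃ : Σ → [-1,1]`. -/
structure MaSt where
  carrier : Type
  [fin : Fintype carrier]
  [nonemp : Nonempty carrier]
  xi : carrier → ℝ
  xi_pos : ∀ τ, 0 < xi τ
  mt : carrier → ℝ
  mt_mem : ∀ τ, mt τ ∈ Set.Icc (-1 : ℝ) 1

attribute [instance] MaSt.fin MaSt.nonemp

/-- The Curie–Weiss trial function `G_N(Σ, ξ, m̃)` associated to a Magnetization
Structure. -/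
noncomputable def Gcw (N : ℕ) (J β : ℝ) (M : MaSt) : ℝ :=
  (1 / (N : ℝ)) * Real.log
    ((∑ σ : Fin N → Bool, ∑ τ : M.carrier,
        M.xi τ * Real.exp (β * J * (N : ℝ) * mag N σ * M.mt τ)) /
      (∑ τ : M.carrier, M.xi τ * Real.exp (β * J * (N : ℝ) / 2 * (M.mt τ) ^ 2)))

open Topology

variable {J β : ℝ}

lemma Zcw_zero : Zcw 0 J β = 1 := by
  simp [Zcw]

lemma Zcw_pos (N : ℕ) : 0 < Zcw N J β :=
  Finset.sum_pos (fun _ _ ↦ exp_pos _) Finset.univ_nonempty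

lemma one_le_Zcw (hβJ : 0 ≤ β * J) (N : ℕ) : 1 ≤ Zcw N J β := by
  calc (1 : ℝ) ≤ exp (β * J * N / 2 * mag N (fun _ ↦ true) ^ 2) := one_le_exp (by positivity)
    _ ≤ Zcw N J β :=
      Finset.single_le_sum (f := fun σ ↦ exp (β * J * N / 2 * mag N σ ^ 2))
        (fun _ _ ↦ (exp_pos _).le) (Finset.mem_univ _)

lemma Zcw_eq_sum_exp_totalSpin {N : ℕ} (hN : N ≠ 0) :
    Zcw N J β = ∑ σ : Fin N → Bool, exp (β * J / 2 * (∑ i, spin (σ i)) ^ 2 / N) := by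
  refine Finset.sum_congr rfl fun σ _ ↦ ?_
  have : (N : ℝ) ≠ 0 := Nat.cast_ne_zero.2 hN
  rw [mag]
  field_simp

lemma add_sq_div_add_le {a b x y : ℝ} (hx : 0 < x) (hy : 0 < y) :
    (a + b) ^ 2 / (x + y) ≤ a ^ 2 / x + b ^ 2 / y := by
  simpa [Fin.sum_univ_two] using
    Finset.sq_sum_div_le_sum_sq_div Finset.univ ![a, b] (g := ![x, y])
      (by simp [Fin.forall_fin_two, hx, hy])

lemma Zcw_add_le_mul (hβJ : 0 ≤ β * J) (m n : ℕ) :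
    Zcw (m + n) J β ≤ Zcw m J β * Zcw n J β := by
  rcases Nat.eq_zero_or_pos m with rfl | hm
  · simp [Zcw_zero]
  rcases Nat.eq_zero_or_pos n with rfl | hn
  · simp [Zcw_zero]
  rw [Zcw_eq_sum_exp_totalSpin (by omega), Zcw_eq_sum_exp_totalSpin hm.ne',
    Zcw_eq_sum_exp_totalSpin hn.ne', Fintype.sum_mul_sum, ← Fintype.sum_prod_type',
    ← (Fin.appendEquiv m n).sum_comp]
  refine Finset.sum_le_sum fun σ _ ↦ ?_
  rw [← exp_add, exp_le_exp]
  have hc : 0 ≤ β * J / 2 := div_nonneg hβJ zero_le_two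
  generalize β * J / 2 = c at hc ⊢
  simp only [Fin.appendEquiv_apply, Fin.sum_univ_add, Fin.append_left, Fin.append_right,
    Nat.cast_add, mul_div_assoc, ← mul_add]
  exact mul_le_mul_of_nonneg_left (add_sq_div_add_le (Nat.cast_pos.2 hm) (Nat.cast_pos.2 hn)) hc

lemma subadditive_log_Zcw (hβJ : 0 ≤ β * J) : Subadditive fun N ↦ log (Zcw N J β) :=
  fun m n ↦ by
    rw [← log_mul (Zcw_pos m).ne' (Zcw_pos n).ne']
    exact log_le_log (Zcw_pos _) (Zcw_add_le_mul hβJ m n)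

lemma tendsto_pressure (hβJ : 0 ≤ β * J) :
    Tendsto (fun N : ℕ ↦ 1 / (N : ℝ) * log (Zcw N J β)) atTop
      (𝓝 (subadditive_log_Zcw hβJ).lim) := by
  have hbdd : BddBelow (Set.range fun N : ℕ ↦ log (Zcw N J β) / N) :=
    ⟨0, by rintro _ ⟨N, rfl⟩; exact div_nonneg (log_nonneg (one_le_Zcw hβJ N)) N.cast_nonneg⟩
  simpa only [one_div_mul_eq_div] using (subadditive_log_Zcw hβJ).tendsto_lim hbdd

lemma exp_mul_mul_le_exp_mul_exp {c : ℝ} (hc : 0 ≤ c) (x y : ℝ) :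
    exp (c * x * y) ≤ exp (c / 2 * x ^ 2) * exp (c / 2 * y ^ 2) := by
  rw [← exp_add, exp_le_exp]
  nlinarith [mul_nonneg hc (sq_nonneg (x - y))]

lemma Gcw_le_pressure (hβJ : 0 ≤ β * J) (N : ℕ) (M : MaSt) :
    Gcw N J β M ≤ 1 / (N : ℝ) * log (Zcw N J β) := by
  have hden : 0 < ∑ τ : M.carrier, M.xi τ * exp (β * J * N / 2 * M.mt τ ^ 2) :=
    Finset.sum_pos (fun τ _ ↦ mul_pos (M.xi_pos τ) (exp_pos _)) Finset.univ_nonempty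
  have hnum : 0 < ∑ σ : Fin N → Bool, ∑ τ : M.carrier,
      M.xi τ * exp (β * J * N * mag N σ * M.mt τ) :=
    Finset.sum_pos (fun _ _ ↦ Finset.sum_pos (fun τ _ ↦ mul_pos (M.xi_pos τ) (exp_pos _))
      Finset.univ_nonempty) Finset.univ_nonempty
  refine mul_le_mul_of_nonneg_left (log_le_log (div_pos hnum hden) ?_) (by positivity)
  rw [div_le_iff₀ hden, Zcw, Fintype.sum_mul_sum]
  refine Finset.sum_le_sum fun σ _ ↦ Finset.sum_le_sum fun τ _ ↦ ?_
  rw [mul_left_comm]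
  exact mul_le_mul_of_nonneg_left (exp_mul_mul_le_exp_mul_exp (by positivity) _ _)
    (M.xi_pos τ).le

noncomputable def magGrid (N : ℕ) (k : Fin (N + 1)) : ℝ := (2 * k - N) / N

lemma abs_magGrid_le (N : ℕ) (k : Fin (N + 1)) : |magGrid N k| ≤ 1 := by
  have hk : (k : ℝ) ≤ N := by exact_mod_cast Nat.lt_succ_iff.1 k.isLt
  rw [magGrid, abs_div, Nat.abs_cast]
  exact div_le_one_of_le₀ (abs_le.2 ⟨by linarith [k.val.cast_nonneg (α := ℝ)], by linarith⟩)
    N.cast_nonneg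

lemma mag_mem_range_magGrid (N : ℕ) (σ : Fin N → Bool) : mag N σ ∈ Set.range (magGrid N) := by
  set t := (Finset.univ.filter fun i ↦ σ i = true).card
  have ht : t < N + 1 := Nat.lt_succ_of_le ((Finset.card_filter_le _ _).trans (by simp))
  refine ⟨⟨t, ht⟩, ?_⟩
  have hspin : ∀ b : Bool, spin b = 2 * (if b = true then 1 else 0) - 1 := by
    intro b; cases b <;> norm_num [spin]
  simp only [magGrid, mag, hspin, Finset.sum_sub_distrib, ← Finset.mul_sum, Finset.sum_boole]
  simp [t, div_eq_inv_mul]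

noncomputable def gridMaSt (N : ℕ) (J β : ℝ) : MaSt where
  carrier := Fin (N + 1)
  xi k := exp (-(β * J * N / 2 * magGrid N k ^ 2))
  xi_pos _ := exp_pos _
  mt := magGrid N
  mt_mem k := abs_le.1 (abs_magGrid_le N k)

lemma pressure_sub_le_Gcw_gridMaSt (N : ℕ) :
    1 / (N : ℝ) * log (Zcw N J β) - log (N + 1) / N ≤ Gcw N J β (gridMaSt N J β) := by
  have hden : ∑ k : Fin (N + 1), exp (-(β * J * N / 2 * magGrid N k ^ 2)) *
      exp (β * J * N / 2 * magGrid N k ^ 2) = N + 1 := by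
    simp [← exp_add]
  have hnum : Zcw N J β ≤ ∑ σ : Fin N → Bool, ∑ k : Fin (N + 1),
      exp (-(β * J * N / 2 * magGrid N k ^ 2)) * exp (β * J * N * mag N σ * magGrid N k) := by
    refine Finset.sum_le_sum fun σ _ ↦ ?_
    obtain ⟨k, hk⟩ := mag_mem_range_magGrid N σ
    calc exp (β * J * N / 2 * mag N σ ^ 2)
        = exp (-(β * J * N / 2 * magGrid N k ^ 2)) * exp (β * J * N * mag N σ * magGrid N k) := by
          rw [← exp_add, hk]; ring_nf
      _ ≤ _ := Finset.single_le_sum (f := fun k ↦ exp (-(β * J * N / 2 * magGrid N k ^ 2)) *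
          exp (β * J * N * mag N σ * magGrid N k))
          (fun _ _ ↦ (mul_pos (exp_pos _) (exp_pos _)).le) (Finset.mem_univ k)
  have hN : (0 : ℝ) < N + 1 := by positivity
  calc 1 / (N : ℝ) * log (Zcw N J β) - log (N + 1) / N
      = 1 / (N : ℝ) * log (Zcw N J β / (N + 1)) := by
        rw [log_div (Zcw_pos N).ne' hN.ne']; ring
    _ ≤ Gcw N J β (gridMaSt N J β) := by
        refine mul_le_mul_of_nonneg_left (log_le_log (div_pos (Zcw_pos N) hN) ?_) (by positivity)
        rw [← hden]
        exact div_le_div_of_nonneg_right hnum (hden ▸ hN.le)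

lemma pressure_sub_le_sSup_Gcw_le_pressure (hβJ : 0 ≤ β * J) (N : ℕ) :
    1 / (N : ℝ) * log (Zcw N J β) - log (N + 1) / N ≤
        sSup {g : ℝ | ∃ M : MaSt, g = Gcw N J β M} ∧
      sSup {g : ℝ | ∃ M : MaSt, g = Gcw N J β M} ≤ 1 / (N : ℝ) * log (Zcw N J β) := by
  have hbdd : BddAbove {g : ℝ | ∃ M : MaSt, g = Gcw N J β M} :=
    ⟨_, by rintro _ ⟨M, rfl⟩; exact Gcw_le_pressure hβJ N M⟩
  exact ⟨(pressure_sub_le_Gcw_gridMaSt N).trans (le_csSup hbdd ⟨gridMaSt N J β, rfl⟩),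
    csSup_le ⟨_, gridMaSt N J β, rfl⟩ (by rintro _ ⟨M, rfl⟩; exact Gcw_le_pressure hβJ N M)⟩

lemma tendsto_log_add_one_div_nat : Tendsto (fun N : ℕ ↦ log (N + 1) / N) atTop (𝓝 0) := by
  have h := (tendsto_pow_log_div_mul_add_atTop 1 (-1) 1 one_ne_zero).comp
    (tendsto_atTop_add_const_right atTop 1 tendsto_natCast_atTop_atTop)
  refine h.congr fun N ↦ ?_
  simp

/-- Extended Variational Principle for the Curie–Weiss model: for every `β > 0`, `J > 0`,
the limit of the supremum over all Magnetization Structures of the trial function `G_N`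
exists and equals the limiting pressure `lim_N (1/N) ln Z_N(β)`. -/
theorem cw_extended_variational_principle (β J : ℝ) (hβ : 0 < β) (hJ : 0 < J) :
    ∃ p : ℝ,
      Tendsto (fun N : ℕ => (1 / (N : ℝ)) * Real.log (Zcw N J β)) atTop (nhds p) ∧
      Tendsto (fun N : ℕ => sSup {g : ℝ | ∃ M : MaSt, g = Gcw N J β M}) atTop (nhds p) := by
  have hβJ : 0 ≤ β * J := (mul_pos hβ hJ).le
  have hp := tendsto_pressure hβJ
  refine ⟨_, hp, tendsto_of_tendsto_of_tendsto_of_le_of_le ?_ hp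
    (fun N ↦ (pressure_sub_le_sSup_Gcw_le_pressure hβJ N).1)
    (fun N ↦ (pressure_sub_le_sSup_Gcw_le_pressure hβJ N).2)⟩
  simpa using hp.sub tendsto_log_add_one_div_nat
end

section
/- Concentration on high-dimensional spheres: for every ε > 0 and δ > 0 there exists K such that for all integers M, N ≥ K, the normalized uniform surface measure μ_{S_{M+N}} of the set { x ∈ S_{M+N} : |(1/M)∑_{i=1}^M x_i² − 1| > ε } ∪ { x ∈ S_{M+N} : |(1/N)∑_{i=M+1}^{M+N} x_i² − 1| > ε } is less than δ; i.e., this measure tends to 0 as M, N → ∞. -/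
open Real MeasureTheory

/-- The normalized (uniform) surface measure on the unit sphere of `ℝ^L`; points of the
sphere `S_L` of radius `√L` are parametrized as `x = √L · y` with `y` on the unit
sphere. -/
noncomputable def sphMeasure (L : ℕ) :
    Measure (Metric.sphere (0 : EuclideanSpace ℝ (Fin L)) 1) :=
  ((volume : Measure (EuclideanSpace ℝ (Fin L))).toSphere Set.univ)⁻¹ •
    (volume : Measure (EuclideanSpace ℝ (Fin L))).toSphere

/-- The point of `S_L = {x ∈ ℝ^L : ∑ x_i² = L}` corresponding to a point `y` of the unit
sphere: `x_i = √L · y_i`. -/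
noncomputable def conf (L : ℕ) (y : Metric.sphere (0 : EuclideanSpace ℝ (Fin L)) 1)
    (i : Fin L) : ℝ :=
  Real.sqrt (L : ℝ) * (y : EuclideanSpace ℝ (Fin L)) i

open Filter Set Metric


noncomputable def Gm (k : ℕ) : ℝ := ∫ x : ℝ, x ^ k * rexp (-x ^ 2 / 2)

lemma integrableGm (k : ℕ) : Integrable (fun x : ℝ => x ^ k * rexp (-x ^ 2 / 2)) := by
  have h := integrable_rpow_mul_exp_neg_mul_sq (b := 1/2) (by norm_num) (s := (k : ℝ))
    (lt_of_lt_of_le neg_one_lt_zero (Nat.cast_nonneg k))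
  refine h.congr ?_
  filter_upwards with x
  rw [Real.rpow_natCast]
  ring_nf

lemma tendsto_pow_mul_exp_zero (k : ℕ) :
    Tendsto (fun x : ℝ => x ^ k * rexp (-x ^ 2 / 2)) atTop (nhds 0) := by
  have h := rpow_mul_exp_neg_mul_sq_isLittleO_exp_neg (b := 1/2) (by norm_num) (k : ℝ)
  have h2 : (fun x : ℝ => x ^ k * rexp (-x ^ 2 / 2)) =o[atTop]
      fun x : ℝ => rexp (-(1/2) * x) := by
    refine h.congr' ?_ (EventuallyEq.refl _ _)
    filter_upwards with x
    rw [Real.rpow_natCast]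
    ring_nf
  refine h2.trans_tendsto ?_
  have hmul : Tendsto (fun x : ℝ => (1/2 : ℝ) * x) atTop atTop :=
    tendsto_id.const_mul_atTop (by norm_num)
  have := Real.tendsto_exp_neg_atTop_nhds_zero.comp hmul
  refine this.congr fun x => ?_
  simp [Function.comp]

lemma Gm_succ_succ (k : ℕ) : Gm (k + 2) = (k + 1) * Gm k := by
  set F : ℝ → ℝ := fun x => -(x ^ (k+1) * rexp (-x ^ 2 / 2)) with hF
  have hderiv : ∀ x : ℝ, HasDerivAt F
      (x ^ (k+2) * rexp (-x ^ 2 / 2) - (k+1) * (x ^ k * rexp (-x ^ 2 / 2))) x := by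
    intro x
    have h1 : HasDerivAt (fun x : ℝ => x ^ (k+1)) ((k+1) * x ^ k) x := by
      simpa using hasDerivAt_pow (k+1) x
    have h2 : HasDerivAt (fun x : ℝ => rexp (-x ^ 2 / 2)) (-x * rexp (-x ^ 2 / 2)) x := by
      have h3 : HasDerivAt (fun x : ℝ => -x ^ 2 / 2) (-x) x := by
        have := (hasDerivAt_pow 2 x).neg.div_const 2
        simpa using this.congr_deriv (by push_cast; ring)
      simpa [mul_comm] using h3.exp
    have := (h1.mul h2).neg
    refine this.congr_deriv ?_
    ring
  have hint : Integrable (fun x : ℝ =>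
      x ^ (k+2) * rexp (-x ^ 2 / 2) - (k+1) * (x ^ k * rexp (-x ^ 2 / 2))) :=
    (integrableGm (k+2)).sub ((integrableGm k).const_mul _)
  have hlim : Tendsto (fun T : ℝ => ∫ x in (-T)..T,
      (x ^ (k+2) * rexp (-x ^ 2 / 2) - (k+1) * (x ^ k * rexp (-x ^ 2 / 2)))) atTop
      (nhds (Gm (k+2) - (k+1) * Gm k)) := by
    have := intervalIntegral_tendsto_integral hint tendsto_neg_atTop_atBot tendsto_id
    rwa [integral_sub (integrableGm (k+2)) ((integrableGm k).const_mul _),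
      integral_const_mul] at this
  have heq : ∀ T : ℝ, (∫ x in (-T)..T,
      (x ^ (k+2) * rexp (-x ^ 2 / 2) - (k+1) * (x ^ k * rexp (-x ^ 2 / 2)))) = F T - F (-T) := by
    intro T
    exact intervalIntegral.integral_eq_sub_of_hasDerivAt (fun x _ => hderiv x)
      hint.intervalIntegrable
  have hlim2 : Tendsto (fun T : ℝ => F T - F (-T)) atTop (nhds 0) := by
    have h1 : Tendsto (fun T : ℝ => T ^ (k+1) * rexp (-T ^ 2 / 2)) atTop (nhds 0) :=
      tendsto_pow_mul_exp_zero (k+1)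
    have h2 : Tendsto (fun T : ℝ => F T - F (-T)) atTop (nhds (-0 - (-1)^(k+1) * -0)) := by
      have hFT : (fun T : ℝ => F T) = fun T => -(T ^ (k+1) * rexp (-T ^ 2 / 2)) := rfl
      have hFnT : ∀ T : ℝ, F (-T) = (-1)^(k+1) * -(T ^ (k+1) * rexp (-T ^ 2 / 2)) := by
        intro T
        simp only [hF]
        rw [neg_pow]
        ring_nf
      simp only [hFnT]
      exact (h1.neg).sub ((h1.neg).const_mul _)
    simpa using h2
  have := tendsto_nhds_unique (hlim.congr fun T => heq T) hlim2
  linarith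


lemma norm_sq_eq {L : ℕ} (x : EuclideanSpace ℝ (Fin L)) : ‖x‖ ^ 2 = ∑ i, x i ^ 2 := by
  rw [EuclideanSpace.norm_eq, sq_sqrt (by positivity)]
  simp [sq_abs]

lemma gauss_fubini {L : ℕ} (w : Fin L → ℕ) :
    ∫ x : EuclideanSpace ℝ (Fin L), (∏ i, x i ^ w i) * rexp (-‖x‖ ^ 2 / 2)
      = ∏ i, Gm (w i) := by
  have hmp := (EuclideanSpace.volume_preserving_symm_measurableEquiv_toLp (Fin L)).symm
  rw [← hmp.integral_comp (MeasurableEquiv.measurableEmbedding _)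
    (fun x : EuclideanSpace ℝ (Fin L) => (∏ i, x i ^ w i) * rexp (-‖x‖ ^ 2 / 2))]
  have : ∀ v : Fin L → ℝ,
      (∏ i, ((MeasurableEquiv.toLp 2 (Fin L → ℝ)).symm.symm v) i ^ w i) *
        rexp (-‖(MeasurableEquiv.toLp 2 (Fin L → ℝ)).symm.symm v‖ ^ 2 / 2)
      = ∏ i, (v i ^ w i * rexp (-(v i) ^ 2 / 2)) := by
    intro v
    have hcoord : ∀ i, ((MeasurableEquiv.toLp 2 (Fin L → ℝ)).symm.symm v) i = v i := fun i => rfl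
    rw [norm_sq_eq]
    simp only [hcoord]
    rw [Finset.prod_mul_distrib]
    congr 1
    rw [← Real.exp_sum]
    congr 1
    rw [← Finset.sum_neg_distrib, ← Finset.sum_div]
  simp only [this]
  exact integral_fintype_prod_eq_prod (fun i t => t ^ w i * rexp (-t ^ 2 / 2))

lemma euclid_nontrivial {L : ℕ} (hL : 0 < L) : Nontrivial (EuclideanSpace ℝ (Fin L)) := by
  haveI : Nonempty (Fin L) := ⟨⟨0, hL⟩⟩
  exact (WithLp.equiv 2 (Fin L → ℝ)).nontrivial

lemma polar {L : ℕ} (hL : 0 < L) (F : EuclideanSpace ℝ (Fin L) → ℝ) (hF : Measurable F)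
    (k : ℕ) (hhom : ∀ (r : ℝ), 0 < r → ∀ y : EuclideanSpace ℝ (Fin L), F (r • y) = r ^ k * F y) :
    ∫ x, F x * rexp (-‖x‖ ^ 2 / 2)
      = (∫ y : sphere (0 : EuclideanSpace ℝ (Fin L)) 1, F y
          ∂(volume : Measure (EuclideanSpace ℝ (Fin L))).toSphere)
        * ∫ r in Ioi (0:ℝ), r ^ (L - 1 + k) * rexp (-r ^ 2 / 2) := by
  haveI := euclid_nontrivial hL
  let E := EuclideanSpace ℝ (Fin L)
  let μ := (volume : Measure E)
  show ∫ x, F x * rexp (-‖x‖ ^ 2 / 2) ∂μ = (∫ y : sphere (0 : E) 1, F y ∂μ.toSphere) * _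
  have hdim : Module.finrank ℝ E = L := finrank_euclideanSpace_fin
  calc
    ∫ x, F x * rexp (-‖x‖ ^ 2 / 2) ∂μ
      = ∫ x : ({(0:E)}ᶜ : Set E), F x * rexp (-‖(x : E)‖ ^ 2 / 2) ∂(μ.comap Subtype.val) := by
        rw [integral_subtype_comap (measurableSet_singleton _).compl
          (fun x : E => F x * rexp (-‖x‖ ^ 2 / 2)), restrict_compl_singleton]
    _ = ∫ p : sphere (0 : E) 1 × Ioi (0:ℝ),
          F ((p.2 : ℝ) • (p.1 : E)) * rexp (-((p.2 : ℝ)) ^ 2 / 2)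
          ∂(μ.toSphere.prod (Measure.volumeIoiPow (Module.finrank ℝ E - 1))) := by
        rw [← μ.measurePreserving_homeomorphUnitSphereProd.integral_comp
          (Homeomorph.measurableEmbedding _)
          (fun p : sphere (0 : E) 1 × Ioi (0:ℝ) =>
            F ((p.2 : ℝ) • (p.1 : E)) * rexp (-((p.2 : ℝ)) ^ 2 / 2))]
        refine integral_congr_ae (Eventually.of_forall fun x => ?_)
        have hx : (x : E) ≠ 0 := x.2
        have hn : ‖(x : E)‖ ≠ 0 := norm_ne_zero_iff.2 hx
        simp only [homeomorphUnitSphereProd_apply_fst_coe, homeomorphUnitSphereProd_apply_snd_coe]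
        rw [smul_inv_smul₀ hn]
    _ = (∫ y : sphere (0 : E) 1, F y ∂μ.toSphere)
        * ∫ r : Ioi (0:ℝ), (r : ℝ) ^ k * rexp (-((r : ℝ)) ^ 2 / 2)
          ∂(Measure.volumeIoiPow (Module.finrank ℝ E - 1)) := by
        rw [← integral_prod_mul (fun y : sphere (0 : E) 1 => F y)
          (fun r : Ioi (0:ℝ) => (r : ℝ) ^ k * rexp (-((r : ℝ)) ^ 2 / 2))]
        refine integral_congr_ae (Eventually.of_forall fun p => ?_)
        dsimp only
        rw [hhom (p.2 : ℝ) p.2.2 (p.1 : E)]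
        ring
    _ = (∫ y : sphere (0 : E) 1, F y ∂μ.toSphere)
        * ∫ r in Ioi (0:ℝ), r ^ (L - 1 + k) * rexp (-r ^ 2 / 2) := by
        congr 1
        simp only [Measure.volumeIoiPow, ENNReal.ofReal]
        rw [integral_withDensity_eq_integral_smul
          ((measurable_subtype_coe.pow_const _).real_toNNReal),
          integral_subtype_comap measurableSet_Ioi
            (fun a : ℝ => (a ^ (Module.finrank ℝ E - 1)).toNNReal • (a ^ k * rexp (-a ^ 2 / 2)))]
        refine setIntegral_congr_fun measurableSet_Ioi fun x hx => ?_
        rw [NNReal.smul_def, Real.coe_toNNReal _ (pow_nonneg hx.out.le _), hdim,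
          smul_eq_mul, ← mul_assoc, ← pow_add]





noncomputable def cst (L k : ℕ) : ℝ := ∫ r in Ioi (0:ℝ), r ^ (L - 1 + k) * rexp (-r ^ 2 / 2)

lemma Gm_zero_pos : 0 < Gm 0 := by
  have h : Gm 0 = ∫ x : ℝ, rexp (-(1/2) * x ^ 2) := by
    unfold Gm
    refine integral_congr_ae (Eventually.of_forall fun x => ?_)
    show x ^ 0 * rexp (-x ^ 2 / 2) = rexp (-(1/2) * x ^ 2)
    rw [pow_zero, one_mul]
    ring_nf
  rw [h, integral_gaussian]
  positivity

lemma cst_pos (L k : ℕ) : 0 < cst L k := by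
  unfold cst
  rw [setIntegral_pos_iff_support_of_nonneg_ae]
  · refine lt_of_lt_of_le (b := volume (Ioi (0:ℝ))) ?_ (measure_mono ?_)
    · rw [Real.volume_Ioi]; exact ENNReal.zero_lt_top
    · intro r hr
      have hr' : (0:ℝ) < r := hr
      exact ⟨(show (0:ℝ) < r ^ (L - 1 + k) * rexp (-r ^ 2 / 2) by positivity).ne', hr⟩
  · filter_upwards [ae_restrict_mem measurableSet_Ioi] with r hr
    have : (0:ℝ) < r := hr
    positivity
  · exact (integrableGm (L - 1 + k)).integrableOn

lemma Gm_two : Gm 2 = Gm 0 := by simpa using Gm_succ_succ 0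
lemma Gm_four : Gm 4 = 3 * Gm 2 := by
  have := Gm_succ_succ 2
  push_cast at this
  linarith

section prods
variable {L : ℕ}

lemma prod_ite_const (i : Fin L) (a b : ℝ) :
    ∏ t, (if t = i then a else b) = a * b ^ (L - 1) := by
  rw [← Finset.mul_prod_erase Finset.univ _ (Finset.mem_univ i), if_pos rfl]
  congr 1
  rw [Finset.prod_congr rfl (fun t ht => if_neg (Finset.ne_of_mem_erase ht)), Finset.prod_const,
    Finset.card_erase_of_mem (Finset.mem_univ i), Finset.card_univ, Fintype.card_fin]

lemma prod_ite_const_pair {i j : Fin L} (hij : i ≠ j) (a b : ℝ) :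
    ∏ t, (if t = i ∨ t = j then a else b) = a ^ 2 * b ^ (L - 2) := by
  have step : ∀ t ∈ (Finset.univ.erase i).erase j, (if t = i ∨ t = j then a else b) = b := by
    intro t ht
    have h1 := Finset.mem_erase.1 ht
    have h2 := Finset.mem_erase.1 h1.2
    exact if_neg (by tauto)
  rw [← Finset.mul_prod_erase Finset.univ _ (Finset.mem_univ i), if_pos (Or.inl rfl),
    ← Finset.mul_prod_erase _ _ (Finset.mem_erase.2 ⟨hij.symm, Finset.mem_univ j⟩),
    if_pos (Or.inr rfl),
    Finset.prod_congr rfl step, Finset.prod_const,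
    Finset.card_erase_of_mem (Finset.mem_erase.2 ⟨hij.symm, Finset.mem_univ j⟩),
    Finset.card_erase_of_mem (Finset.mem_univ i), Finset.card_univ, Fintype.card_fin,
    Nat.sub_sub]
  ring

lemma prod_pow_single (i : Fin L) (x : Fin L → ℝ) :
    ∏ t, x t ^ (if t = i then 2 else 0) = x i ^ 2 := by
  simp [apply_ite (x · ^ ·), Finset.prod_ite_eq']

lemma prod_pow_pair (i j : Fin L) (x : Fin L → ℝ) :
    ∏ t, x t ^ ((if t = i then 2 else 0) + (if t = j then 2 else 0)) = x i ^ 2 * x j ^ 2 := by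
  simp only [pow_add, Finset.prod_mul_distrib]
  rw [prod_pow_single, prod_pow_single]

lemma prod_Gm_single (i : Fin L) :
    ∏ t, Gm (if t = i then 2 else 0) = Gm 2 * Gm 0 ^ (L - 1) := by
  rw [show (fun t => Gm (if t = i then 2 else 0)) = fun t => if t = i then Gm 2 else Gm 0 by
    funext t; by_cases h : t = i <;> simp [h]]
  exact prod_ite_const i _ _

lemma prod_Gm_diag (i : Fin L) :
    ∏ t, Gm ((if t = i then 2 else 0) + (if t = i then 2 else 0)) = Gm 4 * Gm 0 ^ (L - 1) := by
  rw [show (fun t => Gm ((if t = i then 2 else 0) + (if t = i then 2 else 0)))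
      = fun t => if t = i then Gm 4 else Gm 0 by
    funext t; by_cases h : t = i <;> simp [h]]
  exact prod_ite_const i _ _

lemma prod_Gm_offdiag {i j : Fin L} (hij : i ≠ j) :
    ∏ t, Gm ((if t = i then 2 else 0) + (if t = j then 2 else 0))
      = Gm 2 ^ 2 * Gm 0 ^ (L - 2) := by
  rw [show (fun t => Gm ((if t = i then 2 else 0) + (if t = j then 2 else 0)))
      = fun t => if t = i ∨ t = j then Gm 2 else Gm 0 by
    funext t
    by_cases h1 : t = i <;> by_cases h2 : t = j
    · exact absurd (h1 ▸ h2) (h1 ▸ hij)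
    · simp [h1, h2, hij]
    · simp [h1, h2, hij.symm]
    · simp [h1, h2]]
  exact prod_ite_const_pair hij _ _

end prods

section moments

noncomputable def nu (L : ℕ) : Measure (sphere (0 : EuclideanSpace ℝ (Fin L)) 1) :=
  (volume : Measure (EuclideanSpace ℝ (Fin L))).toSphere

instance (L : ℕ) : IsFiniteMeasure (nu L) := by unfold nu; infer_instance

noncomputable def TT (L : ℕ) : ℝ := (nu L Set.univ).toReal

noncomputable def mm (L : ℕ) (i : Fin L) : ℝ :=
  ∫ y : sphere (0 : EuclideanSpace ℝ (Fin L)) 1, ((y : EuclideanSpace ℝ (Fin L)) i) ^ 2 ∂nu L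

noncomputable def qq (L : ℕ) (i j : Fin L) : ℝ :=
  ∫ y : sphere (0 : EuclideanSpace ℝ (Fin L)) 1,
    ((y : EuclideanSpace ℝ (Fin L)) i) ^ 2 * ((y : EuclideanSpace ℝ (Fin L)) j) ^ 2 ∂nu L

variable {L : ℕ}

lemma sum_sq_one (y : sphere (0 : EuclideanSpace ℝ (Fin L)) 1) :
    ∑ i, ((y : EuclideanSpace ℝ (Fin L)) i) ^ 2 = 1 := by
  have h : ‖(y : EuclideanSpace ℝ (Fin L))‖ = 1 := by
    have := y.2; rwa [mem_sphere_zero_iff_norm] at this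
  rw [← norm_sq_eq, h, one_pow]

lemma coord_sq_le (y : sphere (0 : EuclideanSpace ℝ (Fin L)) 1) (i : Fin L) :
    ((y : EuclideanSpace ℝ (Fin L)) i) ^ 2 ≤ 1 := by
  have h := Finset.single_le_sum
    (f := fun t => ((y : EuclideanSpace ℝ (Fin L)) t) ^ 2)
    (fun t _ => sq_nonneg _) (Finset.mem_univ i)
  rwa [sum_sq_one y] at h

lemma meas_coord (i : Fin L) :
    Measurable fun y : sphere (0 : EuclideanSpace ℝ (Fin L)) 1 =>
      ((y : EuclideanSpace ℝ (Fin L)) i) :=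
  by fun_prop

lemma integrable_bdd {f : sphere (0 : EuclideanSpace ℝ (Fin L)) 1 → ℝ}
    (hf : Measurable f) {C : ℝ} (hC : ∀ y, |f y| ≤ C) : Integrable f (nu L) :=
  Integrable.mono' (integrable_const C) hf.aestronglyMeasurable
    (Eventually.of_forall fun y => by simpa using hC y)

lemma mm_rel (hL : 0 < L) (i : Fin L) :
    mm L i * cst L 2 = Gm 2 * Gm 0 ^ (L - 1) := by
  have hpolar := polar hL (fun x => x i ^ 2) (by fun_prop) 2
    (fun r hr y => by simp only [PiLp.smul_apply, smul_eq_mul]; ring)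
  rw [mm, cst, nu, ← hpolar]
  have hfub := gauss_fubini (L := L) (fun t => if t = i then 2 else 0)
  rw [prod_Gm_single i] at hfub
  rw [← hfub]
  refine integral_congr_ae (Eventually.of_forall fun x => ?_)
  dsimp only
  rw [prod_pow_single i (fun t => x t)]

lemma qq_rel_diag (hL : 0 < L) (i : Fin L) :
    qq L i i * cst L 4 = Gm 4 * Gm 0 ^ (L - 1) := by
  have hpolar := polar hL (fun x => x i ^ 2 * x i ^ 2)
    (by fun_prop) 4
    (fun r hr y => by simp only [PiLp.smul_apply, smul_eq_mul]; ring)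
  rw [qq, cst, nu, ← hpolar]
  have hfub := gauss_fubini (L := L)
    (fun t => (if t = i then 2 else 0) + (if t = i then 2 else 0))
  rw [prod_Gm_diag i] at hfub
  rw [← hfub]
  refine integral_congr_ae (Eventually.of_forall fun x => ?_)
  dsimp only
  rw [prod_pow_pair i i (fun t => x t)]

lemma qq_rel_off (hL : 0 < L) {i j : Fin L} (hij : i ≠ j) :
    qq L i j * cst L 4 = Gm 2 ^ 2 * Gm 0 ^ (L - 2) := by
  have hpolar := polar hL (fun x => x i ^ 2 * x j ^ 2)
    (by fun_prop) 4
    (fun r hr y => by simp only [PiLp.smul_apply, smul_eq_mul]; ring)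
  rw [qq, cst, nu, ← hpolar]
  have hfub := gauss_fubini (L := L)
    (fun t => (if t = i then 2 else 0) + (if t = j then 2 else 0))
  rw [prod_Gm_offdiag hij] at hfub
  rw [← hfub]
  refine integral_congr_ae (Eventually.of_forall fun x => ?_)
  dsimp only
  rw [prod_pow_pair i j (fun t => x t)]

end moments

section values
variable {L : ℕ}

lemma integrable_coord_sq (i : Fin L) :
    Integrable (fun y : sphere (0 : EuclideanSpace ℝ (Fin L)) 1 =>
      ((y : EuclideanSpace ℝ (Fin L)) i) ^ 2) (nu L) :=
  integrable_bdd ((meas_coord i).pow_const 2) (C := 1)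
    (fun y => by rw [abs_of_nonneg (sq_nonneg _)]; exact coord_sq_le y i)

lemma integrable_coord_sq_mul (i j : Fin L) :
    Integrable (fun y : sphere (0 : EuclideanSpace ℝ (Fin L)) 1 =>
      ((y : EuclideanSpace ℝ (Fin L)) i) ^ 2 * ((y : EuclideanSpace ℝ (Fin L)) j) ^ 2) (nu L) := by
  refine integrable_bdd (((meas_coord i).pow_const 2).mul ((meas_coord j).pow_const 2))
    (C := 1) (fun y => ?_)
  rw [abs_mul, abs_of_nonneg (sq_nonneg _), abs_of_nonneg (sq_nonneg _)]
  exact mul_le_one₀ (coord_sq_le y i) (sq_nonneg _) (coord_sq_le y j)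

lemma sum_mm (hL : 0 < L) : ∑ i, mm L i = TT L := by
  unfold mm
  rw [← integral_finset_sum Finset.univ (fun i _ => integrable_coord_sq i)]
  rw [integral_congr_ae (Eventually.of_forall fun y => sum_sq_one y)]
  simp [TT, Measure.real]

lemma mm_val (hL : 0 < L) (i : Fin L) : (L : ℝ) * mm L i = TT L := by
  have hcancel : ∀ j, mm L j = mm L i := fun j =>
    mul_right_cancel₀ (cst_pos L 2).ne' ((mm_rel hL j).trans (mm_rel hL i).symm)
  have := sum_mm hL
  rw [Finset.sum_congr rfl (fun j _ => hcancel j), Finset.sum_const, Finset.card_univ,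
    Fintype.card_fin, nsmul_eq_mul] at this
  exact this

lemma sum_qq (hL : 0 < L) : ∑ i, ∑ j, qq L i j = TT L := by
  unfold qq
  rw [Finset.sum_congr rfl (fun i _ =>
    (integral_finset_sum Finset.univ (fun j _ => integrable_coord_sq_mul i j)).symm),
    ← integral_finset_sum Finset.univ (fun i _ =>
      integrable_finset_sum Finset.univ (fun j _ => integrable_coord_sq_mul i j))]
  have hpt : ∀ y : sphere (0 : EuclideanSpace ℝ (Fin L)) 1,
      (∑ i, ∑ j, ((y : EuclideanSpace ℝ (Fin L)) i) ^ 2 * ((y : EuclideanSpace ℝ (Fin L)) j) ^ 2)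
        = (1 : ℝ) := by
    intro y
    rw [← Finset.sum_mul_sum, sum_sq_one y, one_mul]
  rw [integral_congr_ae (Eventually.of_forall hpt)]
  simp [TT, Measure.real]

lemma qq_diag_eq_three (hL2 : 2 ≤ L) (i : Fin L) {i' j' : Fin L} (h : i' ≠ j') :
    qq L i i = 3 * qq L i' j' := by
  have hL : 0 < L := by omega
  refine mul_right_cancel₀ (cst_pos L 4).ne' ?_
  rw [qq_rel_diag hL i, mul_assoc, qq_rel_off hL h]
  rw [Gm_four, Gm_two, show L - 1 = (L - 2) + 1 by omega, pow_succ]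
  ring

lemma qq_off_eq (hL : 0 < L) {i j i' j' : Fin L} (hij : i ≠ j) (h' : i' ≠ j') :
    qq L i j = qq L i' j' :=
  mul_right_cancel₀ (cst_pos L 4).ne' ((qq_rel_off hL hij).trans (qq_rel_off hL h').symm)

lemma qq_off_val (hL2 : 2 ≤ L) {i j : Fin L} (hij : i ≠ j) :
    (L : ℝ) * ((L : ℝ) + 2) * qq L i j = TT L := by
  have hL : 0 < L := by omega
  have hsum := sum_qq hL
  have hrow : ∀ i' : Fin L, ∑ j', qq L i' j' = 3 * qq L i j + ((L : ℝ) - 1) * qq L i j := by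
    intro i'
    rw [← Finset.add_sum_erase Finset.univ _ (Finset.mem_univ i')]
    congr 1
    · exact qq_diag_eq_three hL2 i' hij
    · rw [Finset.sum_congr rfl (fun j' hj' =>
        qq_off_eq hL (Ne.symm (Finset.mem_erase.1 hj').1) hij),
        Finset.sum_const, Finset.card_erase_of_mem (Finset.mem_univ i'), Finset.card_univ,
        Fintype.card_fin, nsmul_eq_mul]
      congr 1
      rw [Nat.cast_sub (by omega)]
      norm_num
  rw [Finset.sum_congr rfl (fun i' _ => hrow i'), Finset.sum_const, Finset.card_univ,
    Fintype.card_fin, nsmul_eq_mul] at hsum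
  rw [← hsum]
  ring

lemma qq_diag_val (hL2 : 2 ≤ L) (i : Fin L) :
    (L : ℝ) * ((L : ℝ) + 2) * qq L i i = 3 * TT L := by
  obtain ⟨i', j', h⟩ : ∃ i' j' : Fin L, i' ≠ j' :=
    ⟨⟨0, by omega⟩, ⟨1, by omega⟩, by simp [Fin.ext_iff]⟩
  rw [qq_diag_eq_three hL2 i h, ← qq_off_val hL2 h]
  ring

end values

section variance

lemma card_filter_lt (M N : ℕ) :
    (Finset.univ.filter (fun i : Fin (M+N) => (i:ℕ) < M)).card = M := by
  rw [Finset.card_filter, Fin.sum_univ_eq_sum_range (fun n => if n < M then 1 else 0) (M+N),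
    Finset.range_eq_Ico, ← Finset.sum_Ico_consecutive _ (Nat.zero_le M) (Nat.le_add_right M N)]
  rw [Finset.sum_congr rfl (fun n hn => if_pos (Finset.mem_Ico.1 hn).2),
    Finset.sum_congr (rfl : Finset.Ico M (M+N) = _)
      (fun n hn => if_neg (by simpa using (Finset.mem_Ico.1 hn).1)),
    Finset.sum_const, Finset.sum_const]
  simp

variable {M N : ℕ}

/-- The partial coordinate sum on the sphere. -/
noncomputable def SS (M N : ℕ) (y : sphere (0 : EuclideanSpace ℝ (Fin (M+N))) 1) : ℝ :=
  ∑ i : Fin (M+N), if (i:ℕ) < M then ((y : EuclideanSpace ℝ (Fin (M+N))) i) ^ 2 else 0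

lemma SS_eq (y : sphere (0 : EuclideanSpace ℝ (Fin (M+N))) 1) :
    SS M N y = ∑ i ∈ Finset.univ.filter (fun i : Fin (M+N) => (i:ℕ) < M),
      ((y : EuclideanSpace ℝ (Fin (M+N))) i) ^ 2 := (Finset.sum_filter _ _).symm

lemma SS_nonneg (y : sphere (0 : EuclideanSpace ℝ (Fin (M+N))) 1) : 0 ≤ SS M N y := by
  rw [SS_eq]
  exact Finset.sum_nonneg fun i _ => sq_nonneg _

lemma SS_le (y : sphere (0 : EuclideanSpace ℝ (Fin (M+N))) 1) : SS M N y ≤ M := by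
  rw [SS_eq]
  calc ∑ i ∈ Finset.univ.filter (fun i : Fin (M+N) => (i:ℕ) < M),
        ((y : EuclideanSpace ℝ (Fin (M+N))) i) ^ 2
      ≤ ∑ i ∈ Finset.univ.filter (fun i : Fin (M+N) => (i:ℕ) < M), 1 :=
        Finset.sum_le_sum fun i _ => coord_sq_le y i
    _ = M := by rw [Finset.sum_const, card_filter_lt, nsmul_eq_mul, mul_one]

lemma meas_SS : Measurable (SS M N) := by
  unfold SS
  exact Finset.measurable_sum _ fun i _ => Measurable.ite
    (MeasurableSet.const _) ((meas_coord i).pow_const 2) measurable_const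

lemma integrable_SS : Integrable (SS M N) (nu (M+N)) :=
  integrable_bdd meas_SS (C := M) fun y =>
    abs_le.2 ⟨by linarith [SS_nonneg y, (Nat.cast_nonneg M : (0:ℝ) ≤ M)], SS_le y⟩

lemma integrable_SS_sq : Integrable (fun y => SS M N y ^ 2) (nu (M+N)) :=
  integrable_bdd (meas_SS.pow_const 2) (C := (M:ℝ)^2) fun y => by
    rw [abs_of_nonneg (sq_nonneg _)]
    exact pow_le_pow_left₀ (SS_nonneg y) (SS_le y) 2

lemma integral_SS (hM : 0 < M) (hN : 0 < N) :
    ((M+N : ℕ) : ℝ) * ∫ y, SS M N y ∂nu (M+N) = M * TT (M+N) := by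
  have hL : 0 < M + N := by omega
  simp_rw [SS_eq]
  rw [integral_finset_sum _ (fun i _ => integrable_coord_sq i), Finset.mul_sum]
  have hval : ∀ i ∈ Finset.univ.filter (fun i : Fin (M+N) => (i:ℕ) < M),
      ((M+N : ℕ) : ℝ) * ∫ y : sphere (0 : EuclideanSpace ℝ (Fin (M+N))) 1,
        ((y : EuclideanSpace ℝ (Fin (M+N))) i) ^ 2 ∂nu (M+N) = TT (M+N) :=
    fun i _ => mm_val hL i
  rw [Finset.sum_congr rfl hval, Finset.sum_const, card_filter_lt, nsmul_eq_mul]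

lemma integral_SS_sq (hM : 0 < M) (hN : 0 < N) :
    ((M+N : ℕ) : ℝ) * (((M+N : ℕ) : ℝ) + 2) * ∫ y, SS M N y ^ 2 ∂nu (M+N)
      = (M : ℝ) * ((M : ℝ) + 2) * TT (M+N) := by
  have hL2 : 2 ≤ M + N := by omega
  set P := Finset.univ.filter (fun i : Fin (M+N) => (i:ℕ) < M) with hPdef
  have hPcard : P.card = M := card_filter_lt M N
  have hpt : ∀ y : sphere (0 : EuclideanSpace ℝ (Fin (M+N))) 1,
      SS M N y ^ 2 = ∑ i ∈ P, ∑ j ∈ P,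
        ((y : EuclideanSpace ℝ (Fin (M+N))) i) ^ 2 * ((y : EuclideanSpace ℝ (Fin (M+N))) j) ^ 2 := by
    intro y
    rw [SS_eq, sq, Finset.sum_mul_sum]
  simp_rw [hpt]
  rw [integral_finset_sum _ (fun i _ => integrable_finset_sum _
    (fun j _ => integrable_coord_sq_mul i j))]
  rw [Finset.sum_congr rfl (fun i _ =>
    integral_finset_sum _ (fun j _ => integrable_coord_sq_mul i j))]
  -- now : L * (L+2) * ∑ i ∈ P, ∑ j ∈ P, qq (M+N) i j = M * (M+2) * TT
  have hrow : ∀ i ∈ P, ((M+N : ℕ) : ℝ) * (((M+N : ℕ) : ℝ) + 2) * ∑ j ∈ P, qq (M+N) i j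
      = 3 * TT (M+N) + ((M : ℝ) - 1) * TT (M+N) := by
    intro i hi
    rw [← Finset.add_sum_erase P _ hi, mul_add, qq_diag_val hL2 i]
    congr 1
    rw [Finset.mul_sum, Finset.sum_congr rfl (fun j hj =>
      qq_off_val hL2 (Ne.symm (Finset.mem_erase.1 hj).1)),
      Finset.sum_const, Finset.card_erase_of_mem hi, hPcard, nsmul_eq_mul,
      Nat.cast_sub (by omega)]
    norm_num
  calc ((M+N : ℕ) : ℝ) * (((M+N : ℕ) : ℝ) + 2) *
        ∑ i ∈ P, ∑ j ∈ P, (∫ y, ((y : EuclideanSpace ℝ (Fin (M+N))) i) ^ 2 *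
          ((y : EuclideanSpace ℝ (Fin (M+N))) j) ^ 2 ∂nu (M+N))
      = ∑ i ∈ P, ((M+N : ℕ) : ℝ) * (((M+N : ℕ) : ℝ) + 2) * ∑ j ∈ P, qq (M+N) i j := by
        rw [Finset.mul_sum]; rfl
    _ = ∑ i ∈ P, (3 * TT (M+N) + ((M : ℝ) - 1) * TT (M+N)) := Finset.sum_congr rfl hrow
    _ = (M : ℝ) * ((M : ℝ) + 2) * TT (M+N) := by
        rw [Finset.sum_const, hPcard, nsmul_eq_mul]; ring

lemma integral_var (hM : 0 < M) (hN : 0 < N) :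
    ∫ y, (((M+N : ℕ) : ℝ) * SS M N y - M) ^ 2 ∂nu (M+N)
      = 2 * M * N * TT (M+N) / (((M+N : ℕ) : ℝ) + 2) := by
  have hL0 : (0:ℝ) < ((M+N : ℕ) : ℝ) := Nat.cast_pos.2 (by omega)
  have hL2 : (0:ℝ) < ((M+N : ℕ) : ℝ) + 2 := by linarith
  have h1 := integral_SS hM hN
  have h2 := integral_SS_sq hM hN
  have e : ∫ y, (((M+N : ℕ) : ℝ) * SS M N y - M) ^ 2 ∂nu (M+N)
      = ((M+N : ℕ) : ℝ)^2 * (∫ y, SS M N y ^ 2 ∂nu (M+N))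
        - (2 * ((M+N : ℕ) : ℝ) * M) * (∫ y, SS M N y ∂nu (M+N)) + (M:ℝ)^2 * TT (M+N) := by
    rw [show (fun y => (((M+N : ℕ) : ℝ) * SS M N y - M) ^ 2)
        = fun y => ((M+N : ℕ) : ℝ)^2 * SS M N y ^ 2
            - (2 * ((M+N : ℕ) : ℝ) * (M:ℝ)) * SS M N y + (M:ℝ)^2 from
      funext fun y => by ring]
    have hb : Integrable (fun y => ((M+N : ℕ) : ℝ)^2 * SS M N y ^ 2) (nu (M+N)) :=
      integrable_SS_sq.const_mul _
    have hc : Integrable (fun y => (2 * ((M+N : ℕ) : ℝ) * (M:ℝ)) * SS M N y) (nu (M+N)) :=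
      integrable_SS.const_mul _
    have ha : Integrable (fun y => ((M+N : ℕ) : ℝ)^2 * SS M N y ^ 2
        - (2 * ((M+N : ℕ) : ℝ) * (M:ℝ)) * SS M N y) (nu (M+N)) := hb.sub hc
    rw [integral_add ha (integrable_const _), integral_sub hb hc,
      integral_const_mul, integral_const_mul, integral_const, smul_eq_mul]
    rw [TT, measureReal_def]
    ring
  have hSS : (∫ y, SS M N y ∂nu (M+N)) = (M:ℝ) * TT (M+N) / ((M+N : ℕ) : ℝ) := by
    rw [eq_div_iff hL0.ne']
    linarith [h1]
  have hSS2 : (∫ y, SS M N y ^ 2 ∂nu (M+N))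
      = (M : ℝ) * ((M : ℝ) + 2) * TT (M+N) / (((M+N : ℕ) : ℝ) * (((M+N : ℕ) : ℝ) + 2)) := by
    rw [eq_div_iff (by positivity)]
    linarith [h2]
  rw [e, hSS, hSS2]
  have hl : ((M+N : ℕ) : ℝ) = (M:ℝ) + (N:ℝ) := by push_cast; ring
  rw [hl] at hL0 hL2 ⊢
  field_simp
  ring

end variance

lemma nu_univ_ne_zero {L : ℕ} (hL : 0 < L) : nu L Set.univ ≠ 0 := by
  haveI := euclid_nontrivial hL
  rw [nu, Measure.toSphere_apply_univ]
  refine mul_ne_zero ?_ (measure_ball_pos _ _ one_pos).ne'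
  rw [finrank_euclideanSpace_fin]
  exact_mod_cast Nat.cast_ne_zero.2 hL.ne'

lemma nu_univ_ne_top (L : ℕ) : nu L Set.univ ≠ ⊤ := measure_ne_top _ _

set_option maxHeartbeats 1000000 in
/-- Concentration on high-dimensional spheres: for every `ε, δ > 0` there is `K` such
that for all `M, N ≥ K`, the normalized uniform measure on `S_{M+N}` of the set of points
`x` with `|(1/M)∑_{i≤M} x_i² − 1| > ε` or `|(1/N)∑_{i>M} x_i² − 1| > ε` is less than `δ`;
i.e. this measure tends to `0` as `M, N → ∞`. -/
theorem sphere_coordinate_concentration (ε δ : ℝ) (hε : 0 < ε) (hδ : 0 < δ) :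
    ∃ K : ℕ, ∀ M N : ℕ, K ≤ M → K ≤ N →
      sphMeasure (M + N)
        ({x | ε < |(1 / (M : ℝ)) *
            (∑ i : Fin (M + N), if (i : ℕ) < M then (conf (M + N) x i) ^ 2 else 0) - 1|} ∪
         {x | ε < |(1 / (N : ℝ)) *
            (∑ i : Fin (M + N), if M ≤ (i : ℕ) then (conf (M + N) x i) ^ 2 else 0) - 1|})
        < ENNReal.ofReal δ := by
  refine ⟨⌈2 / (ε ^ 2 * δ)⌉₊ + 1, fun M N hM hN => ?_⟩
  have hM0 : 0 < M := by omega
  have hN0 : 0 < N := by omega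
  have hL0 : (0:ℝ) < ((M+N : ℕ) : ℝ) := Nat.cast_pos.2 (by omega)
  have hL2 : (0:ℝ) < ((M+N : ℕ) : ℝ) + 2 := by linarith
  set m0 : ℕ := min M N with hm0
  have hm0M : m0 ≤ M := min_le_left _ _
  have hm0N : m0 ≤ N := min_le_right _ _
  have hm0K : ⌈2 / (ε ^ 2 * δ)⌉₊ + 1 ≤ m0 := le_min hM hN
  have hm0pos : (0:ℝ) < (m0 : ℝ) := Nat.cast_pos.2 (by omega)
  -- conf squared
  have hconf : ∀ (x : sphere (0 : EuclideanSpace ℝ (Fin (M+N))) 1) (i : Fin (M+N)),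
      conf (M+N) x i ^ 2 = ((M+N : ℕ) : ℝ) * ((x : EuclideanSpace ℝ (Fin (M+N))) i) ^ 2 := by
    intro x i
    rw [conf, mul_pow, Real.sq_sqrt (Nat.cast_nonneg _)]
  have hsum1 : ∀ x : sphere (0 : EuclideanSpace ℝ (Fin (M+N))) 1,
      (∑ i : Fin (M+N), if (i : ℕ) < M then conf (M+N) x i ^ 2 else 0)
        = ((M+N : ℕ) : ℝ) * SS M N x := by
    intro x
    rw [SS, Finset.mul_sum]
    refine Finset.sum_congr rfl fun i _ => ?_
    by_cases h : (i : ℕ) < M <;> simp [h, hconf x i]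
  have hsum2 : ∀ x : sphere (0 : EuclideanSpace ℝ (Fin (M+N))) 1,
      (∑ i : Fin (M+N), if M ≤ (i : ℕ) then conf (M+N) x i ^ 2 else 0)
        = ((M+N : ℕ) : ℝ) * (1 - SS M N x) := by
    intro x
    have hs : ∀ i : Fin (M+N), (if M ≤ (i : ℕ) then conf (M+N) x i ^ 2 else 0)
        = conf (M+N) x i ^ 2 - (if (i : ℕ) < M then conf (M+N) x i ^ 2 else 0) := by
      intro i
      by_cases h : (i : ℕ) < M
      · rw [if_neg (by omega), if_pos h]; ring
      · rw [if_pos (by omega), if_neg h]; ring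
    rw [Finset.sum_congr rfl (fun i _ => hs i), Finset.sum_sub_distrib, hsum1 x]
    have htot : ∑ i, conf (M+N) x i ^ 2 = ((M+N : ℕ) : ℝ) := by
      rw [Finset.sum_congr rfl (fun i _ => hconf x i), ← Finset.mul_sum, sum_sq_one x, mul_one]
    rw [htot]; ring
  -- event inclusion
  have hincl : ({x | ε < |(1 / (M : ℝ)) *
        (∑ i : Fin (M + N), if (i : ℕ) < M then (conf (M + N) x i) ^ 2 else 0) - 1|} ∪
       {x | ε < |(1 / (N : ℝ)) *
        (∑ i : Fin (M + N), if M ≤ (i : ℕ) then (conf (M + N) x i) ^ 2 else 0) - 1|})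
      ⊆ {y : sphere (0 : EuclideanSpace ℝ (Fin (M+N))) 1 |
          (ε * (m0 : ℝ)) ^ 2 ≤ (((M+N : ℕ) : ℝ) * SS M N y - M) ^ 2} := by
    rintro x (hx | hx)
    · simp only [Set.mem_setOf_eq] at hx ⊢
      rw [hsum1 x] at hx
      have hMr : (0:ℝ) < (M : ℝ) := Nat.cast_pos.2 hM0
      have habs : |1 / (M : ℝ) * (((M+N : ℕ) : ℝ) * SS M N x) - 1|
          = |((M+N : ℕ) : ℝ) * SS M N x - M| / (M : ℝ) := by
        rw [show 1 / (M : ℝ) * (((M+N : ℕ) : ℝ) * SS M N x) - 1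
            = (((M+N : ℕ) : ℝ) * SS M N x - M) / M by field_simp, abs_div, abs_of_pos hMr]
      rw [habs, lt_div_iff₀ hMr] at hx
      have hlt : ε * (m0 : ℝ) < |((M+N : ℕ) : ℝ) * SS M N x - M| := by
        have : ε * (m0 : ℝ) ≤ ε * (M : ℝ) := by
          apply mul_le_mul_of_nonneg_left _ hε.le
          exact_mod_cast hm0M
        linarith
      calc (ε * (m0 : ℝ)) ^ 2 ≤ |((M+N : ℕ) : ℝ) * SS M N x - M| ^ 2 := by
            apply pow_le_pow_left₀ (by positivity) hlt.le
        _ = (((M+N : ℕ) : ℝ) * SS M N x - M) ^ 2 := sq_abs _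
    · simp only [Set.mem_setOf_eq] at hx ⊢
      rw [hsum2 x] at hx
      have hNr : (0:ℝ) < (N : ℝ) := Nat.cast_pos.2 hN0
      have habs : |1 / (N : ℝ) * (((M+N : ℕ) : ℝ) * (1 - SS M N x)) - 1|
          = |((M+N : ℕ) : ℝ) * SS M N x - M| / (N : ℝ) := by
        rw [show 1 / (N : ℝ) * (((M+N : ℕ) : ℝ) * (1 - SS M N x)) - 1
            = -((((M+N : ℕ) : ℝ) * SS M N x - M)) / N by push_cast; field_simp; ring,
          abs_div, abs_neg, abs_of_pos hNr]
      rw [habs, lt_div_iff₀ hNr] at hx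
      have hlt : ε * (m0 : ℝ) < |((M+N : ℕ) : ℝ) * SS M N x - M| := by
        have : ε * (m0 : ℝ) ≤ ε * (N : ℝ) := by
          apply mul_le_mul_of_nonneg_left _ hε.le
          exact_mod_cast hm0N
        linarith
      calc (ε * (m0 : ℝ)) ^ 2 ≤ |((M+N : ℕ) : ℝ) * SS M N x - M| ^ 2 := by
            apply pow_le_pow_left₀ (by positivity) hlt.le
        _ = (((M+N : ℕ) : ℝ) * SS M N x - M) ^ 2 := sq_abs _
  -- Chebyshev
  have hfint : Integrable (fun y => (((M+N : ℕ) : ℝ) * SS M N y - M) ^ 2) (nu (M+N)) := by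
    refine integrable_bdd ((((measurable_const).mul meas_SS).sub measurable_const).pow_const 2)
      (C := (((M+N : ℕ) : ℝ) * M + M) ^ 2) fun y => ?_
    rw [abs_of_nonneg (sq_nonneg _), ← sq_abs]
    refine pow_le_pow_left₀ (abs_nonneg (((M+N : ℕ) : ℝ) * SS M N y - M)) (abs_le.2 ⟨?_, ?_⟩) 2
    · nlinarith [SS_nonneg (M := M) (N := N) y, SS_le (M := M) (N := N) y,
        (Nat.cast_nonneg M : (0:ℝ) ≤ M), hL0]
    · nlinarith [SS_nonneg (M := M) (N := N) y, SS_le (M := M) (N := N) y,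
        (Nat.cast_nonneg M : (0:ℝ) ≤ M), hL0]
  have hcheb := mul_meas_ge_le_integral_of_nonneg
    (Eventually.of_forall fun y => sq_nonneg (((M+N : ℕ) : ℝ) * SS M N y - M))
    hfint ((ε * (m0 : ℝ)) ^ 2)
  rw [integral_var hM0 hN0] at hcheb
  -- real-number bound
  have ht : (0:ℝ) < (ε * (m0 : ℝ)) ^ 2 := by positivity
  set D : ℝ := 2 * (M : ℝ) * N / ((((M+N : ℕ) : ℝ) + 2) * (ε * (m0 : ℝ)) ^ 2) with hD
  have hDnn : 0 ≤ D := by positivity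
  have hbound : (nu (M+N) {y | (ε * (m0 : ℝ)) ^ 2
      ≤ (((M+N : ℕ) : ℝ) * SS M N y - M) ^ 2}).toReal ≤ TT (M+N) * D := by
    have h1 : (nu (M+N) {y | (ε * (m0 : ℝ)) ^ 2
        ≤ (((M+N : ℕ) : ℝ) * SS M N y - M) ^ 2}).toReal
        ≤ 2 * (M : ℝ) * N * TT (M+N) / (((M+N : ℕ) : ℝ) + 2) / (ε * (m0 : ℝ)) ^ 2 := by
      rw [le_div_iff₀ ht]
      rw [measureReal_def] at hcheb
      linarith
    refine h1.trans_eq ?_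
    rw [hD]
    field_simp
  have hDδ : D < δ := by
    have hMN : (M : ℝ) * N ≤ (((M+N : ℕ) : ℝ) + 2) * (m0 : ℝ) := by
      rcases le_total M N with h | h
      · have h1 : m0 = M := min_eq_left h
        rw [h1]
        have : (N : ℝ) ≤ ((M+N : ℕ) : ℝ) + 2 := by push_cast; linarith
        nlinarith [Nat.cast_nonneg (α := ℝ) M]
      · have h1 : m0 = N := min_eq_right h
        rw [h1]
        have : (M : ℝ) ≤ ((M+N : ℕ) : ℝ) + 2 := by push_cast; linarith
        nlinarith [Nat.cast_nonneg (α := ℝ) N]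
    have hD2 : D ≤ 2 / (ε ^ 2 * (m0 : ℝ)) := by
      rw [hD, div_le_div_iff₀ (by positivity) (by positivity)]
      have hε2 : (0:ℝ) < ε ^ 2 := by positivity
      nlinarith [mul_le_mul_of_nonneg_right hMN (mul_pos hε2 hm0pos).le]
    have hm0big : 2 / (ε ^ 2 * δ) < (m0 : ℝ) := by
      have h1 : (2 / (ε ^ 2 * δ)) ≤ (⌈2 / (ε ^ 2 * δ)⌉₊ : ℝ) := Nat.le_ceil _
      have h2 : ((⌈2 / (ε ^ 2 * δ)⌉₊ + 1 : ℕ) : ℝ) ≤ (m0 : ℝ) := by exact_mod_cast hm0K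
      push_cast at h2
      linarith
    have : 2 / (ε ^ 2 * (m0 : ℝ)) < δ := by
      rw [div_lt_iff₀ (by positivity)]
      rw [div_lt_iff₀ (by positivity)] at hm0big
      calc (2:ℝ) < (m0 : ℝ) * (ε ^ 2 * δ) := hm0big
        _ = δ * (ε ^ 2 * (m0 : ℝ)) := by ring
    linarith
  -- ENNReal chain
  have h0 : nu (M+N) Set.univ ≠ 0 := nu_univ_ne_zero (by omega)
  have htop : nu (M+N) Set.univ ≠ ⊤ := nu_univ_ne_top _
  have hfin : nu (M+N) {y | (ε * (m0 : ℝ)) ^ 2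
      ≤ (((M+N : ℕ) : ℝ) * SS M N y - M) ^ 2} ≠ ⊤ := measure_ne_top _ _
  calc sphMeasure (M + N)
        ({x | ε < |(1 / (M : ℝ)) *
            (∑ i : Fin (M + N), if (i : ℕ) < M then (conf (M + N) x i) ^ 2 else 0) - 1|} ∪
         {x | ε < |(1 / (N : ℝ)) *
            (∑ i : Fin (M + N), if M ≤ (i : ℕ) then (conf (M + N) x i) ^ 2 else 0) - 1|})
      = (nu (M+N) Set.univ)⁻¹ * nu (M+N)
          ({x | ε < |(1 / (M : ℝ)) *
            (∑ i : Fin (M + N), if (i : ℕ) < M then (conf (M + N) x i) ^ 2 else 0) - 1|} ∪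
           {x | ε < |(1 / (N : ℝ)) *
            (∑ i : Fin (M + N), if M ≤ (i : ℕ) then (conf (M + N) x i) ^ 2 else 0) - 1|}) := by
        rw [sphMeasure, Measure.smul_apply, smul_eq_mul]; rfl
    _ ≤ (nu (M+N) Set.univ)⁻¹ * nu (M+N) {y | (ε * (m0 : ℝ)) ^ 2
          ≤ (((M+N : ℕ) : ℝ) * SS M N y - M) ^ 2} :=
        mul_le_mul_right (measure_mono hincl) _
    _ = (nu (M+N) Set.univ)⁻¹ * ENNReal.ofReal ((nu (M+N) {y | (ε * (m0 : ℝ)) ^ 2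
          ≤ (((M+N : ℕ) : ℝ) * SS M N y - M) ^ 2}).toReal) := by
        rw [ENNReal.ofReal_toReal hfin]
    _ ≤ (nu (M+N) Set.univ)⁻¹ * ENNReal.ofReal (TT (M+N) * D) :=
        mul_le_mul_right (ENNReal.ofReal_le_ofReal hbound) _
    _ = (nu (M+N) Set.univ)⁻¹ * (nu (M+N) Set.univ * ENNReal.ofReal D) := by
        rw [TT, ENNReal.ofReal_mul ENNReal.toReal_nonneg, ENNReal.ofReal_toReal htop]
    _ = ENNReal.ofReal D := by
        rw [← mul_assoc, ENNReal.inv_mul_cancel h0 htop, one_mul]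
    _ < ENNReal.ofReal δ := by
        exact (ENNReal.ofReal_lt_ofReal_iff hδ).2 hDδ
end
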